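/- Extrapolation effect of ∇Ω ∘ ∇Ω*: assume the kernel matrix K = (exp(−c_{ij}/2))_{i,j} is positive definite. For every f ∈ ℝ^d, the symmetric Sinkhorn potential of g-softmax(f) equals the extrapolation of f shifted down by Ω_C^*(f): ∇Ω(g-softmax(f)) = f^E − Ω_C^*(f)·1. -/

import Mathlib

open Finset Real Filter

noncomputable section

/-- The probability simplex in `ℝ^d`. -/
def simplexS (d : ℕ) : Set (Fin d → ℝ) := stdSimplex ℝ (Fin d)


open scoped Classical

/-- `Φ_C(α,f) = Σ_{i,j} α_i α_j exp(-(f_i + f_j + c_{ij})/2)`. -/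
def Phi {d : ℕ} (C : Matrix (Fin d) (Fin d) ℝ) (α f : Fin d → ℝ) : ℝ :=
  ∑ i, ∑ j, α i * α j * Real.exp (-(f i + f j + C i j) / 2)

/-- The geometric log-sum-exp `Ω_C^*(f) = -log min_{α ∈ △^d} Φ_C(α, f)`. -/
def OmegaStar {d : ℕ} (C : Matrix (Fin d) (Fin d) ℝ) (f : Fin d → ℝ) : ℝ :=
  -Real.log (sInf ((fun α => Phi C α f) '' simplexS d))

/-- The geometric softmax: the (unique, when the kernel is positive definite) minimizer of
`Φ_C(·, f)` over the simplex. -/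
def gsoftmax {d : ℕ} (C : Matrix (Fin d) (Fin d) ℝ) (f : Fin d → ℝ) : Fin d → ℝ :=
  if h : ∃ α ∈ simplexS d, IsMinOn (fun β => Phi C β f) (simplexS d) α
  then h.choose else fun _ => 0

/-- The soft C-transform `T(f,α)_i = -2 log Σ_j α_j exp((f_j - c_{ij})/2)`. -/
def Tsoft {d : ℕ} (C : Matrix (Fin d) (Fin d) ℝ) (f α : Fin d → ℝ) : Fin d → ℝ :=
  fun i => -2 * Real.log (∑ j, α j * Real.exp ((f j - C i j) / 2))

/-- `f` is the symmetric Sinkhorn potential of `α`: `-f = T(-f, α)`. -/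
def IsSinkhornPotential {d : ℕ} (C : Matrix (Fin d) (Fin d) ℝ) (α f : Fin d → ℝ) : Prop :=
  -f = Tsoft C (-f) α

/-- The symmetric Sinkhorn potential `∇Ω(α)`: the (unique, when the kernel is positive
definite) `f` with `-f = T(-f, α)`. -/
def gradOmega {d : ℕ} (C : Matrix (Fin d) (Fin d) ℝ) (α : Fin d → ℝ) : Fin d → ℝ :=
  if h : ∃ f : Fin d → ℝ, IsSinkhornPotential C α f then h.choose else fun _ => 0

/-- The extrapolation `f^E = -T(-(f - Ω_C^*(f)·1), g-softmax(f)) + Ω_C^*(f)·1`. -/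
def extrap {d : ℕ} (C : Matrix (Fin d) (Fin d) ℝ) (f : Fin d → ℝ) : Fin d → ℝ :=
  fun i => -(Tsoft C (fun j => -(f j - OmegaStar C f)) (gsoftmax C f) i) + OmegaStar C f

/-- The kernel matrix `K = (exp(-c_{ij}/2))_{ij}`. -/
def kernelK {d : ℕ} (C : Matrix (Fin d) (Fin d) ℝ) : Matrix (Fin d) (Fin d) ℝ :=
  Matrix.of fun i j => Real.exp (-(C i j) / 2)

/-!
Let `α = g-softmax(f)`, `Ω = Ω_C^*(f)` and `K_f = (exp(-(f_i + f_j + c_{ij})/2))_{ij}`, so that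
`Φ_C(·, f) = ⟨·, K_f ·⟩` and `exp(-Ω) = ⟨α, K_f α⟩`. First-order optimality of `α` on the
simplex gives `(K_f α)_j ≥ ⟨α, K_f α⟩`, with equality on the support of `α`; there this says
exactly that `g := -T(-(f - Ω), α) = f^E - Ω` agrees with `f - Ω`. As `T(·, α)` only reads the
support of `α`, `g` is then a symmetric Sinkhorn potential of `α`.

Symmetric Sinkhorn potentials are unique for any positive kernel: if `g, g'` are two of them,
`u = exp(g/2)` and `w = exp(g'/2)` are positive fixed points of `u ↦ (Σ_j α_j k_{ij} / u_j)_i`,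
a map that is antitone and homogeneous of degree `-1`. Comparing `u` with the extreme multiples
of `w` on the support of `α` shows that `u / w` is constant there, and then equal to `1`.
-/

theorem exists_pos_of_mem_stdSimplex {ι : Type*} [Fintype ι] {α : ι → ℝ}
    (hα : α ∈ stdSimplex ℝ ι) : ∃ j, 0 < α j := by
  obtain ⟨j, -, hj⟩ := Finset.exists_lt_of_sum_lt (by simp [hα.2] : ∑ _ : ι, (0 : ℝ) < ∑ j, α j)
  exact ⟨j, hj⟩

theorem sum_mul_pos_of_mem_stdSimplex {ι : Type*} [Fintype ι] {α x : ι → ℝ}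
    (hα : α ∈ stdSimplex ℝ ι) (hx : ∀ j, 0 < x j) : 0 < ∑ j, α j * x j := by
  obtain ⟨j, hj⟩ := exists_pos_of_mem_stdSimplex hα
  exact Finset.sum_pos' (fun j _ => mul_nonneg (hα.1 j) (hx j).le)
    ⟨j, mem_univ j, mul_pos hj (hx j)⟩

open Topology in
theorem nonneg_of_forall_nonneg_add_mul {a b ε : ℝ} (hε : 0 < ε)
    (h : ∀ t ∈ Set.Ioc 0 ε, 0 ≤ a + b * t) : 0 ≤ a := by
  have hlim : Tendsto (fun t => a + b * t) (𝓝[>] 0) (𝓝 a) := by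
    have hcont : Continuous fun t => a + b * t := by fun_prop
    simpa using (hcont.tendsto 0).mono_left nhdsWithin_le_nhds
  exact ge_of_tendsto hlim (Filter.mem_of_superset (Ioc_mem_nhdsGT hε) h)

section QuadraticForm

open Matrix

variable {ι : Type*} [Fintype ι] {E : Matrix ι ι ℝ}

theorem dotProduct_mulVec_add_smul (hE : E.IsSymm) (x v : ι → ℝ) (t : ℝ) :
    (x + t • v) ⬝ᵥ E *ᵥ (x + t • v) =
      x ⬝ᵥ E *ᵥ x + 2 * t * (v ⬝ᵥ E *ᵥ x) + t ^ 2 * (v ⬝ᵥ E *ᵥ v) := by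
  have hswap : x ⬝ᵥ E *ᵥ v = v ⬝ᵥ E *ᵥ x := by
    rw [dotProduct_mulVec, dotProduct_comm, ← vecMul_transpose, hE.eq]
  simp only [mulVec_add, mulVec_smul, dotProduct_add, add_dotProduct, dotProduct_smul,
    smul_dotProduct, smul_eq_mul, hswap]
  ring

variable [DecidableEq ι] {α : ι → ℝ}

theorem dotProduct_mulVec_le_mulVec_apply_of_isMinOn (hE : E.IsSymm)
    (hα : α ∈ stdSimplex ℝ ι) (hmin : IsMinOn (fun x => x ⬝ᵥ E *ᵥ x) (stdSimplex ℝ ι) α) (q : ι) :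
    α ⬝ᵥ E *ᵥ α ≤ (E *ᵥ α) q := by
  set v := Pi.single q 1 - α
  have hv : v ⬝ᵥ E *ᵥ α = (E *ᵥ α) q - α ⬝ᵥ E *ᵥ α := by
    rw [sub_dotProduct, single_dotProduct, one_mul]
  have hdir : 0 ≤ 2 * (v ⬝ᵥ E *ᵥ α) := by
    refine nonneg_of_forall_nonneg_add_mul (b := v ⬝ᵥ E *ᵥ v) one_pos fun t ht => ?_
    have hmem : α + t • v ∈ stdSimplex ℝ ι :=
      (convex_stdSimplex ℝ ι).add_smul_sub_mem hα (single_mem_stdSimplex ℝ q) ⟨ht.1.le, ht.2⟩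
    have h := isMinOn_iff.1 hmin _ hmem
    rw [dotProduct_mulVec_add_smul hE] at h
    have h' : 0 ≤ t * (2 * (v ⬝ᵥ E *ᵥ α) + (v ⬝ᵥ E *ᵥ v) * t) := by nlinarith
    exact (mul_nonneg_iff_of_pos_left ht.1).1 h'
  linarith

/-- `α ⬝ᵥ E *ᵥ α` is the `α`-average of `E *ᵥ α`, so the bound above is attained on the
support of `α`. -/
theorem mulVec_apply_eq_of_isMinOn (hE : E.IsSymm) (hα : α ∈ stdSimplex ℝ ι)
    (hmin : IsMinOn (fun x => x ⬝ᵥ E *ᵥ x) (stdSimplex ℝ ι) α) {q : ι} (hq : α q ≠ 0) :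
    (E *ᵥ α) q = α ⬝ᵥ E *ᵥ α := by
  have hgap := dotProduct_mulVec_le_mulVec_apply_of_isMinOn hE hα hmin
  have hsum : ∑ j, α j * ((E *ᵥ α) j - α ⬝ᵥ E *ᵥ α) = 0 := by
    simp only [mul_sub, Finset.sum_sub_distrib, ← Finset.sum_mul, hα.2, one_mul]
    exact sub_self _
  have hzero := (Finset.sum_eq_zero_iff_of_nonneg fun j _ =>
    mul_nonneg (hα.1 j) (sub_nonneg.2 (hgap j))).1 hsum q (Finset.mem_univ q)
  linarith [(mul_eq_zero.1 hzero).resolve_left hq]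

end QuadraticForm

section SinkhornMap

variable {ι : Type*} [Fintype ι]

def sinkhornMap (k : ι → ι → ℝ) (α u : ι → ℝ) (i : ι) : ℝ :=
  ∑ j, α j * k i j / u j

variable {k : ι → ι → ℝ} {α : ι → ℝ}

theorem sinkhornMap_smul (k : ι → ι → ℝ) (α u : ι → ℝ) (c : ℝ) :
    sinkhornMap k α (c • u) = c⁻¹ • sinkhornMap k α u := by
  funext i
  simp only [sinkhornMap, Pi.smul_apply, smul_eq_mul, Finset.mul_sum]
  exact Finset.sum_congr rfl fun j _ => by rw [mul_comm c, div_mul_eq_div_div]; ring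

theorem sinkhornMap_congr_of_eqOn_support {u v : ι → ℝ} (huv : ∀ j, α j ≠ 0 → u j = v j) :
    sinkhornMap k α u = sinkhornMap k α v := by
  funext i
  refine Finset.sum_congr rfl fun j _ => ?_
  rcases eq_or_ne (α j) 0 with hj | hj
  · simp [hj]
  · rw [huv j hj]

theorem sinkhornMap_apply_lt (hk : ∀ i j, 0 < k i j) (hα : ∀ j, 0 ≤ α j) {u v : ι → ℝ}
    (huv : ∀ j, α j ≠ 0 → 0 < u j ∧ u j ≤ v j) (hlt : ∃ j, α j ≠ 0 ∧ u j < v j) (i : ι) :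
    sinkhornMap k α v i < sinkhornMap k α u i := by
  obtain ⟨j₀, hj₀, hlt⟩ := hlt
  refine Finset.sum_lt_sum (fun j _ => ?_) ⟨j₀, Finset.mem_univ _, ?_⟩
  · rcases eq_or_ne (α j) 0 with hj | hj
    · simp [hj]
    · exact div_le_div_of_nonneg_left (mul_nonneg (hα j) (hk i j).le) (huv j hj).1
        (huv j hj).2
  · exact div_lt_div_of_pos_left (mul_pos ((hα j₀).lt_of_ne' hj₀) (hk i j₀)) (huv j₀ hj₀).1
      hlt

/-- If `μ < ρ` were the extreme values of `u / w` on the support of `α`, applying the map to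
`μ • w ≤ u ≤ ρ • w` would give both `ρ * μ < 1` and `1 < ρ * μ`. -/
theorem exists_eq_smul_on_support_of_sinkhornMap_eq_self (hk : ∀ i j, 0 < k i j)
    (hα : ∀ j, 0 ≤ α j) (hα₀ : ∃ j, α j ≠ 0) {u w : ι → ℝ} (hu : ∀ i, 0 < u i)
    (hw : ∀ i, 0 < w i) (hTu : sinkhornMap k α u = u) (hTw : sinkhornMap k α w = w) :
    ∃ c : ℝ, 0 < c ∧ ∀ j, α j ≠ 0 → u j = (c • w) j := by
  obtain ⟨j, hj⟩ := hα₀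
  set S := Finset.univ.filter (fun j => α j ≠ 0)
  have hS : S.Nonempty := ⟨j, by simp [S, hj]⟩
  obtain ⟨j₀, hj₀S, hmin⟩ := S.exists_min_image (fun j => u j / w j) hS
  obtain ⟨j₁, hj₁S, hmax⟩ := S.exists_max_image (fun j => u j / w j) hS
  set μ := u j₀ / w j₀
  set ρ := u j₁ / w j₁
  have hj₀ : α j₀ ≠ 0 := (Finset.mem_filter.1 hj₀S).2
  have hj₁ : α j₁ ≠ 0 := (Finset.mem_filter.1 hj₁S).2
  have hμ : 0 < μ := div_pos (hu j₀) (hw j₀)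
  have hρ : 0 < ρ := div_pos (hu j₁) (hw j₁)
  have hu₀ : u j₀ = μ * w j₀ := (div_mul_cancel₀ _ (hw j₀).ne').symm
  have hu₁ : u j₁ = ρ * w j₁ := (div_mul_cancel₀ _ (hw j₁).ne').symm
  have hlow : ∀ j, α j ≠ 0 → 0 < (μ • w) j ∧ (μ • w) j ≤ u j := fun j hj =>
    ⟨mul_pos hμ (hw j), (le_div_iff₀ (hw j)).1 (hmin j (by simp [S, hj]))⟩
  have hup : ∀ j, α j ≠ 0 → 0 < u j ∧ u j ≤ (ρ • w) j := fun j hj =>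
    ⟨hu j, (div_le_iff₀ (hw j)).1 (hmax j (by simp [S, hj]))⟩
  refine ⟨μ, hμ, fun j hj => le_antisymm ?_ (hlow j hj).2⟩
  suffices hμρ : μ = ρ from hμρ ▸ (hup j hj).2
  by_contra hne
  have hlt : μ < ρ := lt_of_le_of_ne (hmin j₁ hj₁S) hne
  have h₁ := sinkhornMap_apply_lt hk hα hlow ⟨j₁, hj₁, by
    simpa [hu₁] using mul_lt_mul_of_pos_right hlt (hw j₁)⟩ j₁
  have h₂ := sinkhornMap_apply_lt hk hα hup ⟨j₀, hj₀, by
    simpa [hu₀] using mul_lt_mul_of_pos_right hlt (hw j₀)⟩ j₀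
  rw [hTu, sinkhornMap_smul, hTw, Pi.smul_apply, smul_eq_mul, hu₁, lt_inv_mul_iff₀ hμ]
    at h₁
  rw [hTu, sinkhornMap_smul, hTw, Pi.smul_apply, smul_eq_mul, hu₀, inv_mul_lt_iff₀ hρ]
    at h₂
  nlinarith [mul_lt_mul_of_pos_right h₁ (hw j₀), mul_lt_mul_of_pos_right h₂ (hw j₁)]

theorem eq_of_sinkhornMap_eq_self (hk : ∀ i j, 0 < k i j) (hα : ∀ j, 0 ≤ α j)
    (hα₀ : ∃ j, α j ≠ 0) {u w : ι → ℝ} (hu : ∀ i, 0 < u i) (hw : ∀ i, 0 < w i)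
    (hTu : sinkhornMap k α u = u) (hTw : sinkhornMap k α w = w) : u = w := by
  obtain ⟨c, hc, hcw⟩ :=
    exists_eq_smul_on_support_of_sinkhornMap_eq_self hk hα hα₀ hu hw hTu hTw
  have hu_eq : u = c⁻¹ • w := by
    rw [← hTw, ← sinkhornMap_smul, ← hTu, sinkhornMap_congr_of_eqOn_support hcw]
  obtain ⟨j, hj⟩ := hα₀
  have hc₁ : c = 1 := by
    have h := (hcw j hj).symm.trans (congrFun hu_eq j)
    rw [Pi.smul_apply, Pi.smul_apply, smul_eq_mul, smul_eq_mul] at h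
    have h' := mul_right_cancel₀ (hw j).ne' h
    field_simp at h'
    nlinarith
  rw [hu_eq, hc₁, inv_one, one_smul]

end SinkhornMap

section Sinkhorn

open Matrix

variable {d : ℕ} {C : Matrix (Fin d) (Fin d) ℝ} {α f g : Fin d → ℝ}

def expKernel (C : Matrix (Fin d) (Fin d) ℝ) (f : Fin d → ℝ) : Matrix (Fin d) (Fin d) ℝ :=
  Matrix.of fun i j => Real.exp (-(f i + f j + C i j) / 2)

theorem expKernel_isSymm (hC : C.IsSymm) (f : Fin d → ℝ) : (expKernel C f).IsSymm := by
  ext i j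
  simp only [expKernel, transpose_apply, of_apply, hC.apply i j]
  ring_nf

theorem Phi_eq_dotProduct_mulVec (C : Matrix (Fin d) (Fin d) ℝ) (α f : Fin d → ℝ) :
    Phi C α f = α ⬝ᵥ expKernel C f *ᵥ α := by
  simp only [Phi, dotProduct, mulVec, expKernel, of_apply, Finset.mul_sum]
  exact Finset.sum_congr rfl fun i _ => Finset.sum_congr rfl fun j _ => by ring

theorem mulVec_expKernel_pos (hα : α ∈ simplexS d) (j : Fin d) :
    0 < (expKernel C f *ᵥ α) j := by
  simpa only [mulVec, dotProduct, expKernel, of_apply, mul_comm] using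
    sum_mul_pos_of_mem_stdSimplex hα fun k => Real.exp_pos (-(f j + f k + C j k) / 2)

theorem gsoftmax_spec [Nonempty (Fin d)] (C : Matrix (Fin d) (Fin d) ℝ) (f : Fin d → ℝ) :
    gsoftmax C f ∈ simplexS d ∧ IsMinOn (fun β => Phi C β f) (simplexS d) (gsoftmax C f) := by
  have hcont : Continuous fun β => Phi C β f := by unfold Phi; fun_prop
  have hex : ∃ α ∈ simplexS d, IsMinOn (fun β => Phi C β f) (simplexS d) α :=
    (isCompact_stdSimplex ℝ (Fin d)).exists_isMinOn
      ⟨_, single_mem_stdSimplex ℝ (Classical.arbitrary (Fin d))⟩ hcont.continuousOn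
  rw [gsoftmax, dif_pos hex]
  exact hex.choose_spec

theorem OmegaStar_eq_of_isMinOn (hα : α ∈ simplexS d)
    (hmin : IsMinOn (fun β => Phi C β f) (simplexS d) α) :
    OmegaStar C f = -Real.log (Phi C α f) := by
  have hleast : IsLeast ((fun β => Phi C β f) '' simplexS d) (Phi C α f) :=
    ⟨⟨α, hα, rfl⟩, by rintro _ ⟨β, hβ, rfl⟩; exact hmin hβ⟩
  rw [OmegaStar, hleast.csInf_eq]

theorem mulVec_expKernel_eq_Phi_of_isMinOn (hC : C.IsSymm) (hα : α ∈ simplexS d)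
    (hmin : IsMinOn (fun β => Phi C β f) (simplexS d) α) {j : Fin d} (hj : α j ≠ 0) :
    (expKernel C f *ᵥ α) j = Phi C α f := by
  simp only [Phi_eq_dotProduct_mulVec] at hmin ⊢
  exact mulVec_apply_eq_of_isMinOn (expKernel_isSymm hC f) hα hmin hj

theorem neg_Tsoft_neg_sub (hα : α ∈ simplexS d) (c : ℝ) (j : Fin d) :
    -Tsoft C (fun k => -(f k - c)) α j =
      f j + c + 2 * Real.log ((expKernel C f *ᵥ α) j) := by
  have hsum : ∑ k, α k * Real.exp ((-(f k - c) - C j k) / 2) =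
      Real.exp ((f j + c) / 2) * (expKernel C f *ᵥ α) j := by
    simp only [mulVec, dotProduct, expKernel, of_apply, Finset.mul_sum]
    refine Finset.sum_congr rfl fun k _ => ?_
    rw [show (-(f k - c) - C j k) / 2 = (f j + c) / 2 + -(f j + f k + C j k) / 2 by ring,
      Real.exp_add]
    ring
  rw [Tsoft, hsum, Real.log_mul (Real.exp_pos _).ne' (mulVec_expKernel_pos hα j).ne',
    Real.log_exp]
  ring

theorem Tsoft_congr_of_eqOn_support {g h : Fin d → ℝ} (hgh : ∀ j, α j ≠ 0 → g j = h j) :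
    Tsoft C g α = Tsoft C h α := by
  funext i
  simp only [Tsoft]
  congr 2
  refine Finset.sum_congr rfl fun j _ => ?_
  rcases eq_or_ne (α j) 0 with hj | hj
  · simp [hj]
  · rw [hgh j hj]

theorem isSinkhornPotential_neg_Tsoft_neg (hg : ∀ j, α j ≠ 0 → -Tsoft C (-g) α j = g j) :
    IsSinkhornPotential C α (-Tsoft C (-g) α) := by
  rw [IsSinkhornPotential, neg_neg]
  exact Tsoft_congr_of_eqOn_support fun j hj => by
    show -g j = _
    rw [← hg j hj, neg_neg]

theorem IsSinkhornPotential.sinkhornMap_exp (hα : α ∈ simplexS d)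
    (hg : IsSinkhornPotential C α g) :
    sinkhornMap (kernelK C) α (fun i => Real.exp (g i / 2)) =
      fun i => Real.exp (g i / 2) := by
  funext i
  have hterm : ∀ j, α j * kernelK C i j / Real.exp (g j / 2) =
      α j * Real.exp ((-g j - C i j) / 2) := fun j => by
    rw [kernelK, of_apply, mul_div_assoc, ← Real.exp_sub]
    ring_nf
  have hgi := congrFun hg i
  simp only [Tsoft, Pi.neg_apply] at hgi
  simp only [sinkhornMap]
  rw [Finset.sum_congr rfl fun j _ => hterm j,
    show g i / 2 = Real.log (∑ j, α j * Real.exp ((-g j - C i j) / 2)) by linarith,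
    Real.exp_log (sum_mul_pos_of_mem_stdSimplex hα fun j => Real.exp_pos _)]

theorem IsSinkhornPotential.unique (hα : α ∈ simplexS d) {g₁ g₂ : Fin d → ℝ}
    (h₁ : IsSinkhornPotential C α g₁) (h₂ : IsSinkhornPotential C α g₂) : g₁ = g₂ := by
  obtain ⟨j, hj⟩ := exists_pos_of_mem_stdSimplex hα
  have hexp := eq_of_sinkhornMap_eq_self (fun i j => Real.exp_pos _) hα.1 ⟨j, hj.ne'⟩
    (fun i => Real.exp_pos _) (fun i => Real.exp_pos _) (h₁.sinkhornMap_exp hα)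
    (h₂.sinkhornMap_exp hα)
  funext i
  linarith [Real.exp_injective (congrFun hexp i)]

theorem gradOmega_eq_of_isSinkhornPotential (hα : α ∈ simplexS d)
    (hg : IsSinkhornPotential C α g) : gradOmega C α = g := by
  have hex : ∃ g, IsSinkhornPotential C α g := ⟨g, hg⟩
  rw [gradOmega, dif_pos hex]
  exact hex.choose_spec.unique hα hg

end Sinkhorn

theorem gradOmega_gsoftmax_extrapolation (d : ℕ) (hd : 1 ≤ d)
    (C : Matrix (Fin d) (Fin d) ℝ) (hCsym : C.IsSymm) (f : Fin d → ℝ) :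
    gradOmega C (gsoftmax C f) = fun i => extrap C f i - OmegaStar C f := by
  have : Nonempty (Fin d) := ⟨⟨0, hd⟩⟩
  obtain ⟨hα, hmin⟩ := gsoftmax_spec C f
  have hΩ : Real.log (Phi C (gsoftmax C f) f) = -OmegaStar C f := by
    rw [OmegaStar_eq_of_isMinOn hα hmin, neg_neg]
  set α := gsoftmax C f
  set Ω := OmegaStar C f
  have hfix : ∀ j, α j ≠ 0 → -Tsoft C (-fun k => f k - Ω) α j = f j - Ω := fun j hj => by
    rw [← mulVec_expKernel_eq_Phi_of_isMinOn hCsym hα hmin hj] at hΩ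
    exact (neg_Tsoft_neg_sub hα Ω j).trans (by rw [hΩ]; ring)
  rw [gradOmega_eq_of_isSinkhornPotential hα (isSinkhornPotential_neg_Tsoft_neg hfix)]
  funext i
  exact (add_sub_cancel_right _ _).symm
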